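/- Let ρ : ℝ³ → ℝ be smooth and everywhere positive and let e, f, g : ℝ³ → ℝ³ be smooth vector fields. Then, pointwise, the cyclic sum over (e, f, g) of the vector field ∇×{ ρ⁻¹ e × [ f (∇·(ρ⁻¹ g)) + ((ρ⁻¹ g)·∇) f − (f·∇)(ρ⁻¹ g) ] } equals zero: Σ_{cyc(e,f,g)} ∇×{ ρ⁻¹ e × [ f ∇·(ρ⁻¹ g) + (ρ⁻¹ g·∇) f − (f·∇)(ρ⁻¹ g) ] } = 0. -/

import Mathlib

open MeasureTheory Real
open scoped ContDiff

noncomputable section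

abbrev V3 : Type := Fin 3 → ℝ

def dot (a b : V3) : ℝ := ∑ i, a i * b i

def cross (a b : V3) : V3 :=
  ![a 1 * b 2 - a 2 * b 1, a 2 * b 0 - a 0 * b 2, a 0 * b 1 - a 1 * b 0]

/-- Partial derivative `∂ᵢ f` of a scalar field. -/
def pd (i : Fin 3) (f : V3 → ℝ) (x : V3) : ℝ := fderiv ℝ f x (Pi.single i 1)

/-- Gradient of a scalar field. -/
def grad (f : V3 → ℝ) (x : V3) : V3 := fun i => pd i f x

/-- Divergence of a vector field. -/
def vdiv (u : V3 → V3) (x : V3) : ℝ := ∑ i, pd i (fun y => u y i) x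

/-- Curl of a vector field. -/
def curl (u : V3 → V3) (x : V3) : V3 :=
  ![pd 1 (fun y => u y 2) x - pd 2 (fun y => u y 1) x,
    pd 2 (fun y => u y 0) x - pd 0 (fun y => u y 2) x,
    pd 0 (fun y => u y 1) x - pd 1 (fun y => u y 0) x]

/-- Directional derivative `(a·∇)u` of a vector field `u` along the vector `a`. -/
def dirDeriv (a : V3) (u : V3 → V3) (x : V3) : V3 :=
  fun i => ∑ j, a j * pd j (fun y => u y i) x

/-- The fundamental cell of the flat torus `T³ = ℝ³/(2πℤ)³`. -/
def T3 : Set V3 := Set.Icc 0 (fun _ => 2 * π)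

/-- Periodicity with period `2π` in each coordinate direction. -/
def Periodic3 {α : Type*} (f : V3 → α) : Prop :=
  ∀ (x : V3) (i : Fin 3), f (x + Pi.single i (2 * π)) = f x

/-- The vector field `ρ⁻¹ e × [ f ∇·(ρ⁻¹ g) + (ρ⁻¹ g·∇) f − (f·∇)(ρ⁻¹ g) ]`. -/
def W (ρ : V3 → ℝ) (e f g : V3 → V3) (y : V3) : V3 :=
  cross ((ρ y)⁻¹ • e y)
    ((vdiv (fun z => (ρ z)⁻¹ • g z) y) • f y
      + dirDeriv ((ρ y)⁻¹ • g y) f y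
      - dirDeriv (f y) (fun z => (ρ z)⁻¹ • g z) y)

/-! ### Auxiliary material for the proof -/

set_option maxHeartbeats 2000000

lemma one_le_inftyC : (1 : WithTop ℕ∞) ≤ ∞ := by
  rw [show ((1:WithTop ℕ∞)) = (((1:ℕ∞)):WithTop ℕ∞) from rfl]
  exact WithTop.coe_le_coe.2 le_top

lemma two_le_inftyC : (2 : WithTop ℕ∞) ≤ ∞ := by
  rw [show ((2:WithTop ℕ∞)) = (((2:ℕ∞)):WithTop ℕ∞) from rfl]
  exact WithTop.coe_le_coe.2 le_top

lemma pd_add {f g : V3 → ℝ} {x : V3} (i : Fin 3)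
    (hf : DifferentiableAt ℝ f x) (hg : DifferentiableAt ℝ g x) :
    pd i (fun y => f y + g y) x = pd i f x + pd i g x := by
  simp [pd, fderiv_fun_add hf hg]

lemma pd_sub {f g : V3 → ℝ} {x : V3} (i : Fin 3)
    (hf : DifferentiableAt ℝ f x) (hg : DifferentiableAt ℝ g x) :
    pd i (fun y => f y - g y) x = pd i f x - pd i g x := by
  simp [pd, fderiv_fun_sub hf hg]

lemma pd_mul {f g : V3 → ℝ} {x : V3} (i : Fin 3)
    (hf : DifferentiableAt ℝ f x) (hg : DifferentiableAt ℝ g x) :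
    pd i (fun y => f y * g y) x = pd i f x * g x + f x * pd i g x := by
  simp [pd, fderiv_fun_mul hf hg]; ring

@[fun_prop]
lemma contDiff_pd {f : V3 → ℝ} (i : Fin 3) (hf : ContDiff ℝ ∞ f) :
    ContDiff ℝ ∞ (pd i f) :=
  (hf.fderiv_right (m := ∞)
    (by rw [show (∞:WithTop ℕ∞) + 1 = (((⊤+1 :ℕ∞)):WithTop ℕ∞) from rfl]
        exact WithTop.coe_le_coe.2 le_top)).clm_apply contDiff_const

@[fun_prop]
lemma differentiable_pd {f : V3 → ℝ} (i : Fin 3) (hf : ContDiff ℝ ∞ f) :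
    Differentiable ℝ (pd i f) :=
  (contDiff_pd i hf).differentiable (by simp)

lemma pd_comm {f : V3 → ℝ} (hf : ContDiff ℝ ∞ f) (i j : Fin 3) (x : V3) :
    pd i (pd j f) x = pd j (pd i f) x := by
  have hsymm : IsSymmSndFDerivAt ℝ f x :=
    hf.contDiffAt.isSymmSndFDerivAt (by simpa using two_le_inftyC)
  have hdf : DifferentiableAt ℝ (fderiv ℝ f) x :=
    ((hf.fderiv_right (m := ∞)
      (by rw [show (∞:WithTop ℕ∞) + 1 = (((⊤+1 :ℕ∞)):WithTop ℕ∞) from rfl]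
          exact WithTop.coe_le_coe.2 le_top)).differentiable (by simp)) x
  have key : ∀ v w : V3, fderiv ℝ (fun y => fderiv ℝ f y v) x w
      = fderiv ℝ (fderiv ℝ f) x w v := by
    intro v w
    rw [fderiv_clm_apply hdf (differentiableAt_const v)]
    simp
  unfold pd
  rw [key, key, hsymm]

/-- `W` with `ρ⁻¹` replaced by a general scalar field `r`. -/
def W' (r : V3 → ℝ) (e f g : V3 → V3) (y : V3) : V3 :=
  cross (r y • e y)
    ((vdiv (fun z => r z • g z) y) • f y
      + dirDeriv (r y • g y) f y
      - dirDeriv (f y) (fun z => r z • g z) y)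

lemma key_identity (r : V3 → ℝ) (e f g : V3 → V3)
    (hr : ContDiff ℝ ∞ r) (he : ContDiff ℝ ∞ e) (hf : ContDiff ℝ ∞ f)
    (hg : ContDiff ℝ ∞ g) (y : V3) (k : Fin 3) :
    W' r e f g y k + W' r g e f y k + W' r f g e y k
      = pd k (fun z => r z * (r z * dot (e z) (cross (f z) (g z)))) y := by
  have hrd : Differentiable ℝ r := hr.differentiable (by simp)
  have hed : Differentiable ℝ e := he.differentiable (by simp)
  have hfd : Differentiable ℝ f := hf.differentiable (by simp)
  have hgd : Differentiable ℝ g := hg.differentiable (by simp)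
  fin_cases k <;>
  · simp only [Fin.zero_eta, Fin.mk_one, Fin.reduceFinMk, W', cross, vdiv,
      dirDeriv, dot, Fin.sum_univ_three,
      Matrix.cons_val_zero, Matrix.cons_val_one, Matrix.head_cons,
      Matrix.cons_val_two, Matrix.tail_cons, Pi.add_apply, Pi.sub_apply,
      Pi.smul_apply, smul_eq_mul, Fin.isValue]
    simp (disch := fun_prop) only [pd_mul, pd_add, pd_sub]
    ring

lemma W'_differentiable (r : V3 → ℝ) (e f g : V3 → V3)
    (hr : ContDiff ℝ ∞ r) (he : ContDiff ℝ ∞ e) (hf : ContDiff ℝ ∞ f)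
    (hg : ContDiff ℝ ∞ g) (k : Fin 3) :
    Differentiable ℝ (fun y => W' r e f g y k) := by
  have hrd : Differentiable ℝ r := hr.differentiable (by simp)
  have hed : Differentiable ℝ e := he.differentiable (by simp)
  have hfd : Differentiable ℝ f := hf.differentiable (by simp)
  have hgd : Differentiable ℝ g := hg.differentiable (by simp)
  fin_cases k <;>
  · simp only [Fin.zero_eta, Fin.mk_one, Fin.reduceFinMk, W', cross, vdiv,
      dirDeriv, dot, Fin.sum_univ_three,
      Matrix.cons_val_zero, Matrix.cons_val_one, Matrix.head_cons,
      Matrix.cons_val_two, Matrix.tail_cons, Pi.add_apply, Pi.sub_apply,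
      Pi.smul_apply, smul_eq_mul, Fin.isValue]
    fun_prop

lemma aux_main (r : V3 → ℝ) (e f g : V3 → V3)
    (hr : ContDiff ℝ ∞ r) (he : ContDiff ℝ ∞ e) (hf : ContDiff ℝ ∞ f)
    (hg : ContDiff ℝ ∞ g) (x : V3) :
    curl (W' r e f g) x + curl (W' r g e f) x + curl (W' r f g e) x = 0 := by
  have hφ : ContDiff ℝ ∞ (fun z => r z * (r z * dot (e z) (cross (f z) (g z)))) := by
    simp only [dot, cross, Fin.sum_univ_three,
      Matrix.cons_val_zero, Matrix.cons_val_one, Matrix.head_cons,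
      Matrix.cons_val_two, Matrix.tail_cons]
    fun_prop
  have hsum : ∀ i k : Fin 3,
      pd i (fun y => W' r e f g y k) x + pd i (fun y => W' r g e f y k) x
        + pd i (fun y => W' r f g e y k) x
      = pd i (pd k (fun z => r z * (r z * dot (e z) (cross (f z) (g z))))) x := by
    intro i k
    have d1 := (W'_differentiable r e f g hr he hf hg k).differentiableAt (x := x)
    have d2 := (W'_differentiable r g e f hr hg he hf k).differentiableAt (x := x)
    have d3 := (W'_differentiable r f g e hr hf hg he k).differentiableAt (x := x)
    have hfun : (fun y => W' r e f g y k + W' r g e f y k + W' r f g e y k)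
        = pd k (fun z => r z * (r z * dot (e z) (cross (f z) (g z)))) :=
      funext fun y => key_identity r e f g hr he hf hg y k
    calc pd i (fun y => W' r e f g y k) x + pd i (fun y => W' r g e f y k) x
          + pd i (fun y => W' r f g e y k) x
        = pd i (fun y => W' r e f g y k + W' r g e f y k + W' r f g e y k) x := by
          rw [pd_add i (d1.fun_add d2) d3, pd_add i d1 d2]
      _ = pd i (pd k (fun z => r z * (r z * dot (e z) (cross (f z) (g z))))) x := by
          rw [hfun]
  funext k
  fin_cases k <;>
  · simp only [Fin.zero_eta, Fin.mk_one, Fin.reduceFinMk, curl,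
      Pi.add_apply, Pi.zero_apply,
      Matrix.cons_val_zero, Matrix.cons_val_one, Matrix.head_cons,
      Matrix.cons_val_two, Matrix.tail_cons, Fin.isValue]
    first
    | linear_combination (hsum 1 2) - (hsum 2 1) + pd_comm hφ 1 2 x
    | linear_combination (hsum 2 0) - (hsum 0 2) + pd_comm hφ 2 0 x
    | linear_combination (hsum 0 1) - (hsum 1 0) + pd_comm hφ 0 1 x

theorem pointwise_cyclic_curl_identity
    (ρ : V3 → ℝ) (e f g : V3 → V3)
    (hρ : ContDiff ℝ ∞ ρ) (hρpos : ∀ x, 0 < ρ x)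
    (he : ContDiff ℝ ∞ e) (hf : ContDiff ℝ ∞ f) (hg : ContDiff ℝ ∞ g) :
    ∀ x : V3, curl (W ρ e f g) x + curl (W ρ g e f) x + curl (W ρ f g e) x = 0 := by
  intro x
  exact aux_main (fun y => (ρ y)⁻¹) e f g
    (hρ.inv fun z => (hρpos z).ne') he hf hg x

end
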